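/- In a PRAX (S,R), the collection δ_{lu}(S) of proto-definite subsets (those A with A^l = A and A^u = A) is closed under binary union, binary intersection and set complement, and contains ∅ and S; hence with these operations it forms a Boolean lattice (a Boolean subalgebra of the powerset of S). -/

import Mathlib

/-! Always `A^l ⊆ A`, and by reflexivity `A ⊆ A^u`; moreover `A^u ⊆ A` already forces `A ⊆ A^l`
(each `a ∈ A` lies in `[a]`, which meets `A`). So `A` is proto-definite iff every
neighbourhood meeting `A` lies inside `A`, i.e. iff no neighbourhood meets both `A` and `Aᶜ`;
this condition is visibly stable under `∪`, `∩` and complement. -/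

/-- `R` is proto-transitive. -/
def ProtoTransitive {S : Type*} (R : S → S → Prop) : Prop :=
  ∀ x y z : S, x ≠ y → y ≠ z → R x y → R y x → R y z → R z y → R x z

/-- Successor neighborhood `[x] = {y | R y x}`. -/
def nbhd {S : Type*} (R : S → S → Prop) (x : S) : Set S := {y | R y x}

/-- Symmetrized successor neighborhood `[x]ₒ = {y | R y x ∧ R x y}`. -/
def nbhdO {S : Type*} (R : S → S → Prop) (x : S) : Set S := {y | R y x ∧ R x y}

/-- Lower proto approximation `A^l = ⋃ {[x] | [x] ⊆ A}`. -/
def lowerP {S : Type*} (R : S → S → Prop) (A : Set S) : Set S :=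
  {z | ∃ x : S, z ∈ nbhd R x ∧ nbhd R x ⊆ A}

/-- Upper proto approximation `A^u = ⋃ {[x] | [x] ∩ A ≠ ∅}`. -/
def upperP {S : Type*} (R : S → S → Prop) (A : Set S) : Set S :=
  {z | ∃ x : S, z ∈ nbhd R x ∧ (nbhd R x ∩ A).Nonempty}

/-- Symmetrized lower proto approximation `A^{l_o}`. -/
def lowerO {S : Type*} (R : S → S → Prop) (A : Set S) : Set S :=
  {z | ∃ x : S, z ∈ nbhdO R x ∧ nbhdO R x ⊆ A}

/-- Symmetrized upper proto approximation `A^{u_o}`. -/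
def upperO {S : Type*} (R : S → S → Prop) (A : Set S) : Set S :=
  {z | ∃ x : S, z ∈ nbhdO R x ∧ (nbhdO R x ∩ A).Nonempty}

/-- Point-wise lower approximation `A^{l+} = {x | [x] ⊆ A}`. -/
def lPlus {S : Type*} (R : S → S → Prop) (A : Set S) : Set S :=
  {x | nbhd R x ⊆ A}

/-- Point-wise upper approximation `A^{u+} = {x | [x] ∩ A ≠ ∅}`. -/
def uPlus {S : Type*} (R : S → S → Prop) (A : Set S) : Set S :=
  {x | (nbhd R x ∩ A).Nonempty}

/-- `A` is proto-definite: `A^l = A = A^u`. -/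
def ProtoDefinite {S : Type*} (R : S → S → Prop) (A : Set S) : Prop :=
  lowerP R A = A ∧ upperP R A = A

section

variable {S : Type*} {R : S → S → Prop} {A B : Set S}

lemma lowerP_subset (A : Set S) : lowerP R A ⊆ A := by
  rintro z ⟨x, hzx, hsub⟩
  exact hsub hzx

lemma subset_upperP (hrefl : ∀ x : S, R x x) (A : Set S) : A ⊆ upperP R A :=
  fun a ha => ⟨a, hrefl a, a, hrefl a, ha⟩

lemma upperP_subset_iff :
    upperP R A ⊆ A ↔ ∀ x : S, (nbhd R x ∩ A).Nonempty → nbhd R x ⊆ A :=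
  ⟨fun h x hx _ hy => h ⟨x, hy, hx⟩, fun h _ ⟨x, hzx, hx⟩ => h x hx hzx⟩

lemma subset_lowerP_of_upperP_subset (hrefl : ∀ x : S, R x x) (h : upperP R A ⊆ A) :
    A ⊆ lowerP R A :=
  fun a ha => ⟨a, hrefl a, upperP_subset_iff.1 h a ⟨a, hrefl a, ha⟩⟩

lemma protoDefinite_iff (hrefl : ∀ x : S, R x x) :
    ProtoDefinite R A ↔ ∀ x : S, (nbhd R x ∩ A).Nonempty → nbhd R x ⊆ A := by
  rw [← upperP_subset_iff]
  refine ⟨fun h => h.2.subset, fun h => ⟨?_, ?_⟩⟩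
  · exact (lowerP_subset A).antisymm (subset_lowerP_of_upperP_subset hrefl h)
  · exact h.antisymm (subset_upperP hrefl A)

lemma protoDefinite_empty : ProtoDefinite R (∅ : Set S) :=
  ⟨Set.subset_empty_iff.1 (lowerP_subset ∅),
    Set.subset_empty_iff.1 (upperP_subset_iff.2 fun _ ⟨_, _, h⟩ => h.elim)⟩

lemma protoDefinite_univ (hrefl : ∀ x : S, R x x) : ProtoDefinite R (Set.univ : Set S) :=
  (protoDefinite_iff hrefl).2 fun _ _ => Set.subset_univ _

lemma ProtoDefinite.union (hrefl : ∀ x : S, R x x) (hA : ProtoDefinite R A)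
    (hB : ProtoDefinite R B) : ProtoDefinite R (A ∪ B) := by
  rw [protoDefinite_iff hrefl] at hA hB ⊢
  rintro x ⟨y, hyx, hyA | hyB⟩
  · exact (hA x ⟨y, hyx, hyA⟩).trans Set.subset_union_left
  · exact (hB x ⟨y, hyx, hyB⟩).trans Set.subset_union_right

lemma ProtoDefinite.inter (hrefl : ∀ x : S, R x x) (hA : ProtoDefinite R A)
    (hB : ProtoDefinite R B) : ProtoDefinite R (A ∩ B) := by
  rw [protoDefinite_iff hrefl] at hA hB ⊢
  rintro x ⟨y, hyx, hyA, hyB⟩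
  exact Set.subset_inter (hA x ⟨y, hyx, hyA⟩) (hB x ⟨y, hyx, hyB⟩)

lemma ProtoDefinite.compl (hrefl : ∀ x : S, R x x) (hA : ProtoDefinite R A) :
    ProtoDefinite R Aᶜ := by
  rw [protoDefinite_iff hrefl] at hA ⊢
  rintro x ⟨y, hyx, hyA⟩ z hzx hzA
  exact hyA (hA x ⟨z, hzx, hzA⟩ hyx)

end

theorem protoDefinite_boolean_algebra_general {S : Type*} (R : S → S → Prop)
    (hrefl : ∀ x : S, R x x) :
    ProtoDefinite R (∅ : Set S) ∧
    ProtoDefinite R (Set.univ : Set S) ∧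
    (∀ A B : Set S, ProtoDefinite R A → ProtoDefinite R B → ProtoDefinite R (A ∪ B)) ∧
    (∀ A B : Set S, ProtoDefinite R A → ProtoDefinite R B → ProtoDefinite R (A ∩ B)) ∧
    (∀ A : Set S, ProtoDefinite R A → ProtoDefinite R Aᶜ) :=
  ⟨protoDefinite_empty, protoDefinite_univ hrefl,
    fun _ _ hA hB => hA.union hrefl hB, fun _ _ hA hB => hA.inter hrefl hB,
    fun _ hA => hA.compl hrefl⟩

/-- in a PRAX, the proto-definite subsets contain `∅` and `S` and are
closed under binary union, binary intersection and complement; hence they form a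
Boolean sublattice of the powerset. -/
theorem protoDefinite_boolean_algebra {S : Type*} (R : S → S → Prop)
    (hrefl : ∀ x : S, R x x) (hproto : ProtoTransitive R) :
    ProtoDefinite R (∅ : Set S) ∧
    ProtoDefinite R (Set.univ : Set S) ∧
    (∀ A B : Set S, ProtoDefinite R A → ProtoDefinite R B → ProtoDefinite R (A ∪ B)) ∧
    (∀ A B : Set S, ProtoDefinite R A → ProtoDefinite R B → ProtoDefinite R (A ∩ B)) ∧
    (∀ A : Set S, ProtoDefinite R A → ProtoDefinite R Aᶜ) :=
  protoDefinite_boolean_algebra_general R hrefl
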